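/- arXiv:2012.00268 — 2 statements merged into one kernel-verified Lean document; each statement's English description precedes it below -/
import Mathlib

section
/- Let m_B, m_E be positive integers, K_B, K_E > 0, ρ_B, ρ_E > 0 real. Let f_B = f_{m_B,K_B,ρ_B} be the integer-parameter Rician shadowed PDF of the main channel and F_E = F_{m_E,K_E,ρ_E} the integer-parameter Rician shadowed CDF of the eavesdropper channel. Then ∫₀^∞ F_E(γ)·f_B(γ) dγ = Σ_{l=0}^{m_E−1} Σ_{n=0}^{m_B−1} B_l(m_E,K_E)·B_n(m_B,K_B)·( 1 − Σ_{k=0}^{m_E−l−1} (k + m_B − n − 1)! / [ ρ_B^{m_B−n} · ρ_E^k · (m_B−n−1)! · k! ] · (1/ρ_B + 1/ρ_E)^{−(k+m_B−n)} ). -/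
/-!
Both `f_{m,K,ρ}` and `F_{m,K,ρ}` are mixtures, with the weights `B_n(m,K)`, of Erlang laws of
shape `m - n` and scale `ρ`, so the integral splits into branch integrals of an Erlang
distribution function of scale `ρ_E` against an Erlang density of scale `ρ_B`. There the `1` of the
distribution function integrates the density to `1`, and every other term multiplies the two
exponentials into a Gamma integral
`∫₀^∞ γ^{k+r-1} e^{-(1/ρ_B + 1/ρ_E) γ} dγ = (k+r-1)! (1/ρ_B + 1/ρ_E)^{-(k+r)}`.
-/

open MeasureTheory Filter Finset Real

/-- Coefficients `B_n(m,K)` of the integer-parameter Rician shadowed model. -/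
noncomputable def Bcoef (m : ℕ) (K : ℝ) (n : ℕ) : ℝ :=
  ((m - 1).choose n : ℝ) * ((m : ℝ) / (K + m)) ^ n * (K / (K + m)) ^ (m - 1 - n)

/-- Integer-parameter Rician shadowed PDF with parameters `(m, K, ρ)`. -/
noncomputable def rsPDF (m : ℕ) (K ρ : ℝ) (γ : ℝ) : ℝ :=
  ∑ n ∈ Finset.range m,
    Bcoef m K n * γ ^ (m - n - 1) * Real.exp (-γ / ρ) /
      (ρ ^ (m - n) * ((m - n - 1).factorial : ℝ))

/-- Integer-parameter Rician shadowed CDF with parameters `(m, K, ρ)`. -/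
noncomputable def rsCDF (m : ℕ) (K ρ : ℝ) (γ : ℝ) : ℝ :=
  ∑ j ∈ Finset.range m,
    Bcoef m K j *
      (1 - Real.exp (-γ / ρ) *
        ∑ k ∈ Finset.range (m - j), γ ^ k / (ρ ^ k * (k.factorial : ℝ)))

/-- Alternate Rician Shadowed (ARS) PDF with parameters `(p, m, K₁, K₂, ρ₁, ρ₂)`. -/
noncomputable def arsPDF (p : ℝ) (m : ℕ) (K₁ K₂ ρ₁ ρ₂ : ℝ) (γ : ℝ) : ℝ :=
  p * rsPDF m K₁ ρ₁ γ + (1 - p) * rsPDF m K₂ ρ₂ γ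

/-- Alternate Rician Shadowed (ARS) CDF with parameters `(p, m, K₁, K₂, ρ₁, ρ₂)`. -/
noncomputable def arsCDF (p : ℝ) (m : ℕ) (K₁ K₂ ρ₁ ρ₂ : ℝ) (γ : ℝ) : ℝ :=
  p * rsCDF m K₁ ρ₁ γ + (1 - p) * rsCDF m K₂ ρ₂ γ

theorem integral_pow_mul_exp_neg_mul_Ioi (a : ℕ) {b : ℝ} (hb : 0 < b) :
    ∫ t in Set.Ioi 0, t ^ a * exp (-(b * t)) = a.factorial / b ^ (a + 1) := by
  have h := integral_rpow_mul_exp_neg_mul_Ioi (a := a + 1) (by positivity) hb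
  rw [add_sub_cancel_right, Gamma_nat_eq_factorial, ← Nat.cast_succ, Real.rpow_natCast] at h
  simp_rw [Real.rpow_natCast] at h
  rw [h, one_div, inv_pow, Nat.succ_eq_add_one, inv_mul_eq_div]

theorem integrableOn_pow_mul_exp_neg_mul_Ioi (a : ℕ) {b : ℝ} (hb : 0 < b) :
    IntegrableOn (fun t : ℝ => t ^ a * exp (-(b * t))) (Set.Ioi 0) :=
  .of_integral_ne_zero (by rw [integral_pow_mul_exp_neg_mul_Ioi a hb]; positivity)

noncomputable def erlangPDF (r : ℕ) (ρ γ : ℝ) : ℝ :=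
  γ ^ (r - 1) * exp (-γ / ρ) / (ρ ^ r * ((r - 1).factorial : ℝ))

noncomputable def erlangCDF (r : ℕ) (ρ γ : ℝ) : ℝ :=
  1 - exp (-γ / ρ) * ∑ k ∈ range r, γ ^ k / (ρ ^ k * (k.factorial : ℝ))

theorem rsPDF_eq_sum_erlangPDF (m : ℕ) (K ρ γ : ℝ) :
    rsPDF m K ρ γ = ∑ n ∈ range m, Bcoef m K n * erlangPDF (m - n) ρ γ :=
  sum_congr rfl fun n _ => by rw [erlangPDF, Nat.sub_sub]; ring

theorem rsCDF_eq_sum_erlangCDF (m : ℕ) (K ρ γ : ℝ) :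
    rsCDF m K ρ γ = ∑ j ∈ range m, Bcoef m K j * erlangCDF (m - j) ρ γ :=
  rfl

theorem erlangCDF_mul_erlangPDF (N r : ℕ) (ρE ρB γ : ℝ) :
    erlangCDF N ρE γ * erlangPDF r ρB γ =
      erlangPDF r ρB γ - ∑ k ∈ range N,
        (ρB ^ r * ρE ^ k * ((r - 1).factorial : ℝ) * (k.factorial : ℝ))⁻¹ *
          (γ ^ (k + (r - 1)) * exp (-((1 / ρB + 1 / ρE) * γ))) := by
  have hexp : exp (-((1 / ρB + 1 / ρE) * γ)) = exp (-γ / ρE) * exp (-γ / ρB) := by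
    rw [← exp_add]; ring_nf
  simp only [erlangCDF, erlangPDF, hexp, pow_add, sub_mul, one_mul, mul_sum, sum_mul]
  congr 1
  exact sum_congr rfl fun k _ => by field_simp

section Erlang

variable {ρ ρB ρE : ℝ}

theorem integral_erlangPDF {r : ℕ} (hr : 0 < r) (hρ : 0 < ρ) :
    ∫ γ in Set.Ioi 0, erlangPDF r ρ γ = 1 := by
  obtain ⟨a, rfl⟩ := Nat.exists_eq_add_of_lt hr
  have h := integral_pow_mul_exp_neg_mul_Ioi a (one_div_pos.2 hρ)
  have hexp (γ : ℝ) : -γ / ρ = -(1 / ρ * γ) := by ring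
  simp only [erlangPDF, zero_add, Nat.add_sub_cancel, integral_div, hexp, h, div_pow, one_pow]
  field_simp

theorem integrableOn_erlangPDF {r : ℕ} (hr : 0 < r) (hρ : 0 < ρ) :
    IntegrableOn (erlangPDF r ρ) (Set.Ioi 0) :=
  .of_integral_ne_zero (by rw [integral_erlangPDF hr hρ]; exact one_ne_zero)

theorem integrableOn_erlangCDF_mul_erlangPDF (N : ℕ) {r : ℕ} (hr : 0 < r) (hρB : 0 < ρB)
    (hρE : 0 < ρE) :
    IntegrableOn (fun γ => erlangCDF N ρE γ * erlangPDF r ρB γ) (Set.Ioi 0) := by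
  simp_rw [erlangCDF_mul_erlangPDF]
  exact (integrableOn_erlangPDF hr hρB).sub (integrable_finsetSum _ fun k _ =>
    (integrableOn_pow_mul_exp_neg_mul_Ioi _ (by positivity)).const_mul _)

theorem integral_erlangCDF_mul_erlangPDF (N : ℕ) {r : ℕ} (hr : 0 < r) (hρB : 0 < ρB)
    (hρE : 0 < ρE) :
    ∫ γ in Set.Ioi 0, erlangCDF N ρE γ * erlangPDF r ρB γ =
      1 - ∑ k ∈ range N,
        ((k + r - 1).factorial : ℝ) /
            (ρB ^ r * ρE ^ k * ((r - 1).factorial : ℝ) * (k.factorial : ℝ)) *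
          (1 / ρB + 1 / ρE) ^ (-((k + r : ℕ) : ℤ)) := by
  have hs : 0 < 1 / ρB + 1 / ρE := by positivity
  have hterm (k : ℕ) := (integrableOn_pow_mul_exp_neg_mul_Ioi (k + (r - 1)) hs).const_mul
    (ρB ^ r * ρE ^ k * ((r - 1).factorial : ℝ) * (k.factorial : ℝ))⁻¹
  simp_rw [erlangCDF_mul_erlangPDF]
  rw [integral_sub (integrableOn_erlangPDF hr hρB) (integrable_finsetSum _ fun k _ => hterm k),
    integral_erlangPDF hr hρB, integral_finsetSum _ fun k _ => hterm k]
  congr 1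
  refine sum_congr rfl fun k _ => ?_
  have hk : k + (r - 1) + 1 = k + r := by omega
  rw [integral_const_mul, integral_pow_mul_exp_neg_mul_Ioi _ hs, hk, zpow_neg, zpow_natCast,
    ← Nat.add_sub_assoc hr]
  ring

end Erlang

theorem pnz_branch_pair_general (mB mE : ℕ)
    (KB KE ρB ρE : ℝ) (hρB : 0 < ρB) (hρE : 0 < ρE) :
    ∫ γ in Set.Ioi (0 : ℝ), rsCDF mE KE ρE γ * rsPDF mB KB ρB γ =
      ∑ l ∈ Finset.range mE, ∑ n ∈ Finset.range mB,
        Bcoef mE KE l * Bcoef mB KB n *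
          (1 - ∑ k ∈ Finset.range (mE - l),
            ((k + mB - n - 1).factorial : ℝ) /
                (ρB ^ (mB - n) * ρE ^ k * ((mB - n - 1).factorial : ℝ) *
                  (k.factorial : ℝ)) *
              (1 / ρB + 1 / ρE) ^ (-((k + mB - n : ℕ) : ℤ))) := by
  have hshape {n : ℕ} (hn : n ∈ range mB) : 0 < mB - n := Nat.sub_pos_of_lt (mem_range.1 hn)
  have hbranch (l : ℕ) {n : ℕ} (hn : n ∈ range mB) := integrableOn_erlangCDF_mul_erlangPDF
    (mE - l) (hshape hn) hρB hρE |>.const_mul (Bcoef mE KE l * Bcoef mB KB n)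
  simp_rw [rsCDF_eq_sum_erlangCDF, rsPDF_eq_sum_erlangPDF, sum_mul_sum, mul_mul_mul_comm]
  rw [integral_finsetSum _ fun l _ => integrable_finsetSum _ fun n hn => hbranch l hn]
  refine sum_congr rfl fun l _ => ?_
  rw [integral_finsetSum _ fun n hn => hbranch l hn]
  refine sum_congr rfl fun n hn => ?_
  rw [integral_const_mul, integral_erlangCDF_mul_erlangPDF _ (hshape hn) hρB hρE]
  simp only [Nat.add_sub_assoc (mem_range.1 hn).le]

/-- One branch pair of the closed-form probability of non-zero secrecy capacity
(integer `m`). -/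
theorem pnz_branch_pair (mB mE : ℕ) (hmB : 0 < mB) (hmE : 0 < mE)
    (KB KE ρB ρE : ℝ) (hKB : 0 < KB) (hKE : 0 < KE) (hρB : 0 < ρB) (hρE : 0 < ρE) :
    ∫ γ in Set.Ioi (0 : ℝ), rsCDF mE KE ρE γ * rsPDF mB KB ρB γ =
      ∑ l ∈ Finset.range mE, ∑ n ∈ Finset.range mB,
        Bcoef mE KE l * Bcoef mB KB n *
          (1 - ∑ k ∈ Finset.range (mE - l),
            ((k + mB - n - 1).factorial : ℝ) /
                (ρB ^ (mB - n) * ρE ^ k * ((mB - n - 1).factorial : ℝ) *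
                  (k.factorial : ℝ)) *
              (1 / ρB + 1 / ρE) ^ (-((k + mB - n : ℕ) : ℤ))) :=
  pnz_branch_pair_general mB mE KB KE ρB ρE hρB hρE
end

section
/- Let m_B, m_E be positive integers, K_{B,1}, K_{B,2}, K_{E,1}, K_{E,2} > 0, ρ_{E,1}, ρ_{E,2} > 0, c₁, c₂ > 0 real, and p_B, p_E ∈ [0,1]. For s > 0, let f_B^{(s)} be the ARS PDF with parameters (p_B, m_B, K_{B,1}, K_{B,2}, c₁·s, c₂·s), and let F_E^{ARS} be the ARS CDF with parameters (p_E, m_E, K_{E,1}, K_{E,2}, ρ_{E,1}, ρ_{E,2}). Then I₁(s) = ∫₀^∞ ln(1+γ)·f_B^{(s)}(γ)·F_E^{ARS}(γ) dγ satisfies lim_{s→∞} I₁(s) / log₂(s) = ln 2. -/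
/-!
Substituting `γ = s u` turns the main-channel density with scales `cᵢ s` into the fixed
density `g` with scales `cᵢ`, so that `I₁(s) = ∫ log (1 + s u) g(u) F_E(s u) du`. For fixed `u > 0`,
`log (1 + s u) / log s → 1` and `F_E(s u) → 1`, while for `s ≥ 2` the quotient is dominated by
`(2 + log (1 + u) / log 2) |g u|` up to a bound of `F_E` on `[0, ∞)`; this dominating function is
integrable because `g` has a first moment. Dominated convergence gives `I₁(s) / log s → ∫ g = 1`,
and `log₂ s = log s / log 2`.
-/

open MeasureTheory Filter Finset Real

open Set Topology

lemma integrableOn_pow_mul_exp_neg_div {r : ℝ} (hr : 0 < r) (b : ℕ) :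
    IntegrableOn (fun x : ℝ => x ^ b * exp (-x / r)) (Ioi 0) := by
  have hb : (-1 : ℝ) < b := by linarith [(b.cast_nonneg : (0 : ℝ) ≤ b)]
  refine (integrableOn_rpow_mul_exp_neg_mul_rpow hb one_pos (inv_pos.mpr hr)).congr_fun
    (fun x _ => ?_) measurableSet_Ioi
  simp only [rpow_one, rpow_natCast]
  ring_nf

lemma integral_pow_mul_exp_neg_div {r : ℝ} (hr : 0 < r) (b : ℕ) :
    ∫ x in Ioi 0, x ^ b * exp (-x / r) = b.factorial * r ^ (b + 1) := by
  have h := integral_rpow_mul_exp_neg_mul_Ioi (a := b + 1) (by positivity) (inv_pos.mpr hr)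
  have hpow : r ^ ((b : ℝ) + 1) = r ^ (b + 1) := by exact_mod_cast rpow_natCast r (b + 1)
  rw [one_div, inv_inv, Gamma_nat_eq_factorial, hpow] at h
  rw [mul_comm, ← h]
  refine setIntegral_congr_fun measurableSet_Ioi fun x _ => ?_
  rw [add_sub_cancel_right, rpow_natCast]
  ring_nf

lemma tendsto_pow_mul_exp_neg_div_atTop_nhds_zero {r : ℝ} (hr : 0 < r) (k : ℕ) :
    Tendsto (fun x : ℝ => x ^ k * exp (-x / r)) atTop (𝓝 0) := by
  refine (tendsto_rpow_mul_exp_neg_mul_atTop_nhds_zero k r⁻¹ (inv_pos.mpr hr)).congr fun x => ?_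
  rw [rpow_natCast]
  ring_nf

lemma exists_norm_le_of_tendsto_atTop {E : Type*} [SeminormedAddGroup E] {f : ℝ → E} {L : E}
    (hf : Continuous f) (hL : Tendsto f atTop (𝓝 L)) (a : ℝ) :
    ∃ M, ∀ x ∈ Ici a, ‖f x‖ ≤ M := by
  obtain ⟨N, hN⟩ := eventually_atTop.mp (hL.norm.eventually (eventually_le_nhds (lt_add_one ‖L‖)))
  obtain ⟨M, hM⟩ := (isCompact_Icc (a := a) (b := N)).exists_bound_of_continuousOn hf.continuousOn
  refine ⟨max M (‖L‖ + 1), fun x hx => ?_⟩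
  rcases le_total x N with hxN | hxN
  · exact (hM x ⟨hx, hxN⟩).trans (le_max_left _ _)
  · exact (hN x hxN).trans (le_max_right _ _)

lemma integrableOn_log_one_add_mul {g : ℝ → ℝ} (hg : IntegrableOn g (Ioi 0))
    (hg₁ : IntegrableOn (fun u => u * g u) (Ioi 0)) :
    IntegrableOn (fun u => log (1 + u) * g u) (Ioi 0) := by
  have hmeas : Measurable fun u : ℝ => log (1 + u) := by fun_prop
  refine hg₁.norm.mono' (hmeas.aestronglyMeasurable.mul hg.aestronglyMeasurable)
    ((ae_restrict_iff' measurableSet_Ioi).mpr (ae_of_all _ ?_))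
  intro u (hu : 0 < u)
  have hlog : 0 ≤ log (1 + u) := log_nonneg (by linarith)
  rw [norm_mul, norm_mul, norm_of_nonneg hlog, norm_of_nonneg hu.le]
  gcongr
  linarith [log_le_sub_one_of_pos (show 0 < 1 + u by linarith)]

lemma log_one_add_mul_div_log_le {s u : ℝ} (hs : 2 ≤ s) (hu : 0 ≤ u) :
    log (1 + s * u) / log s ≤ 2 + log (1 + u) / log 2 := by
  have hlogs : 0 < log s := log_pos (by linarith)
  have hle : log (1 + s * u) ≤ 2 * log s + log (1 + u) := by
    rw [← log_rpow (by linarith), ← log_mul (by positivity) (by linarith)]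
    refine log_le_log (by positivity) ?_
    rw [rpow_two]
    nlinarith [mul_nonneg hu (show 0 ≤ s ^ 2 - s by nlinarith)]
  have hlogu : log (1 + u) / log s ≤ log (1 + u) / log 2 :=
    div_le_div_of_nonneg_left (log_nonneg (by linarith)) (log_pos one_lt_two)
      (log_le_log two_pos hs)
  calc log (1 + s * u) / log s ≤ (2 * log s + log (1 + u)) / log s := by gcongr
    _ = 2 + log (1 + u) / log s := by field_simp
    _ ≤ 2 + log (1 + u) / log 2 := by linarith

lemma tendsto_log_one_add_mul_div_log {u : ℝ} (hu : 0 < u) :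
    Tendsto (fun s => log (1 + s * u) / log s) atTop (𝓝 1) := by
  have hrest : Tendsto (fun s => log (s⁻¹ + u) / log s) atTop (𝓝 0) := by
    refine Tendsto.div_atTop (a := log u) ?_ tendsto_log_atTop
    have h : Tendsto (fun s : ℝ => s⁻¹ + u) atTop (𝓝 u) := by
      simpa using tendsto_inv_atTop_zero.add_const u
    exact (continuousAt_log hu.ne').tendsto.comp h
  have h := hrest.const_add 1
  rw [add_zero] at h
  refine h.congr' ?_
  filter_upwards [eventually_gt_atTop 1] with s hs
  have hs₀ : 0 < s := by linarith
  rw [show 1 + s * u = s * (s⁻¹ + u) by field_simp,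
    log_mul hs₀.ne' (show 0 < s⁻¹ + u by positivity).ne',
    add_div, div_self (log_pos hs).ne']

theorem tendsto_integral_log_one_add_mul_mul_div_log {g C : ℝ → ℝ} {L : ℝ}
    (hg : IntegrableOn g (Ioi 0)) (hlog : IntegrableOn (fun u => log (1 + u) * g u) (Ioi 0))
    (hC : Continuous C) (hCL : Tendsto C atTop (𝓝 L)) :
    Tendsto (fun s => (∫ u in Ioi 0, log (1 + s * u) * g u * C (s * u)) / log s) atTop
      (𝓝 (L * ∫ u in Ioi 0, g u)) := by
  obtain ⟨M, hM⟩ := exists_norm_le_of_tendsto_atTop hC hCL 0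
  rw [← integral_const_mul]
  refine (tendsto_integral_filter_of_dominated_convergence
    (F := fun s u => log (1 + s * u) / log s * (g u * C (s * u)))
    (fun u => M * (2 * ‖g u‖ + ‖log (1 + u) * g u‖ / log 2)) ?_ ?_ ?_ ?_).congr fun s => ?_
  · exact Eventually.of_forall fun s => (Measurable.aestronglyMeasurable (by fun_prop)).mul
      (hg.aestronglyMeasurable.mul (hC.comp (continuous_const_mul s)).aestronglyMeasurable)
  · filter_upwards [eventually_ge_atTop 2] with s hs
    refine (ae_restrict_iff' measurableSet_Ioi).mpr (ae_of_all _ fun u (hu : 0 < u) => ?_)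
    have hlogu : 0 ≤ log (1 + u) := log_nonneg (by linarith)
    have hΦ : 0 ≤ log (1 + s * u) / log s :=
      div_nonneg (log_nonneg (by nlinarith)) (log_nonneg (by linarith))
    rw [norm_mul, norm_mul, norm_mul, norm_of_nonneg hΦ, norm_of_nonneg hlogu]
    calc log (1 + s * u) / log s * (‖g u‖ * ‖C (s * u)‖)
        ≤ (2 + log (1 + u) / log 2) * (‖g u‖ * M) := by
          gcongr
          · exact log_one_add_mul_div_log_le hs hu.le
          · exact hM _ (mem_Ici.mpr (by positivity))
      _ = M * (2 * ‖g u‖ + log (1 + u) * ‖g u‖ / log 2) := by ring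
  · exact ((hg.norm.const_mul 2).add (hlog.norm.div_const _)).const_mul M
  · refine (ae_restrict_iff' measurableSet_Ioi).mpr (ae_of_all _ fun u (hu : 0 < u) => ?_)
    have hCu : Tendsto (fun s => C (s * u)) atTop (𝓝 L) :=
      hCL.comp (tendsto_id.atTop_mul_const hu)
    convert (tendsto_log_one_add_mul_div_log hu).mul
      ((tendsto_const_nhds (x := g u)).mul hCu) using 2
    ring
  · rw [← integral_div]
    congr 1 with u
    ring

section RicianShadowed

variable {m : ℕ} {K ρ : ℝ}

lemma sum_Bcoef (hm : 0 < m) (hK : K + m ≠ 0) : ∑ n ∈ range m, Bcoef m K n = 1 := by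
  have h := add_pow ((m : ℝ) / (K + m)) (K / (K + m)) (m - 1)
  rw [← add_div, add_comm (m : ℝ), div_self hK, one_pow, Nat.sub_add_cancel hm] at h
  rw [h]
  refine sum_congr rfl fun n _ => ?_
  unfold Bcoef
  ring

lemma rsPDF_eq_sum (γ : ℝ) :
    rsPDF m K ρ γ = ∑ n ∈ range m, Bcoef m K n / (ρ ^ (m - n) * (m - n - 1).factorial) *
      (γ ^ (m - n - 1) * exp (-γ / ρ)) :=
  sum_congr rfl fun _ _ => by ring

lemma integrableOn_pow_mul_rsPDF (hρ : 0 < ρ) (k : ℕ) :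
    IntegrableOn (fun γ => γ ^ k * rsPDF m K ρ γ) (Ioi 0) := by
  simp_rw [rsPDF_eq_sum, mul_sum]
  refine integrable_finsetSum _ fun n _ => ?_
  exact IntegrableOn.congr_fun
    ((integrableOn_pow_mul_exp_neg_div hρ (k + (m - n - 1))).const_mul
      (Bcoef m K n / (ρ ^ (m - n) * (m - n - 1).factorial)))
    (fun γ _ => by ring) measurableSet_Ioi

lemma integrableOn_rsPDF (hρ : 0 < ρ) : IntegrableOn (rsPDF m K ρ) (Ioi 0) := by
  simpa using integrableOn_pow_mul_rsPDF (m := m) (K := K) hρ 0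

lemma integral_rsPDF (hm : 0 < m) (hK : K + m ≠ 0) (hρ : 0 < ρ) :
    ∫ γ in Ioi 0, rsPDF m K ρ γ = 1 := by
  simp_rw [rsPDF_eq_sum]
  rw [integral_finsetSum _ fun n _ => (integrableOn_pow_mul_exp_neg_div hρ _).const_mul _,
    ← sum_Bcoef hm hK]
  refine sum_congr rfl fun n hn => ?_
  have hmn : m - n - 1 + 1 = m - n := by grind
  rw [integral_const_mul, integral_pow_mul_exp_neg_div hρ, hmn]
  field_simp

lemma rsPDF_scale {c s : ℝ} (hc : c ≠ 0) (hs : s ≠ 0) (u : ℝ) :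
    s * rsPDF m K (c * s) (s * u) = rsPDF m K c u := by
  rw [rsPDF_eq_sum, rsPDF_eq_sum, mul_sum]
  refine sum_congr rfl fun n hn => ?_
  obtain ⟨a, ha⟩ : ∃ a, m - n = a + 1 := ⟨m - n - 1, by grind⟩
  rw [ha, Nat.add_sub_cancel, show -(s * u) / (c * s) = -u / c by field_simp, mul_pow, mul_pow]
  field_simp
  ring

lemma continuous_rsCDF : Continuous (rsCDF m K ρ) := by
  unfold rsCDF
  fun_prop

lemma tendsto_rsCDF_atTop (hm : 0 < m) (hK : K + m ≠ 0) (hρ : 0 < ρ) :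
    Tendsto (rsCDF m K ρ) atTop (𝓝 1) := by
  have htail (N : ℕ) : Tendsto (fun γ => exp (-γ / ρ) *
      ∑ k ∈ range N, γ ^ k / (ρ ^ k * k.factorial)) atTop (𝓝 0) := by
    have h := tendsto_finsetSum (range N) fun k _ =>
      (tendsto_pow_mul_exp_neg_div_atTop_nhds_zero hρ k).div_const (ρ ^ k * k.factorial)
    simp only [zero_div, sum_const_zero] at h
    refine h.congr fun γ => ?_
    rw [mul_sum]
    exact sum_congr rfl fun k _ => by ring
  rw [← sum_Bcoef hm hK]
  unfold rsCDF
  refine tendsto_finsetSum _ fun j _ => ?_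
  simpa using ((htail (m - j)).const_sub 1).const_mul (Bcoef m K j)

end RicianShadowed

section AlternateRicianShadowed

variable {p : ℝ} {m : ℕ} {K₁ K₂ ρ₁ ρ₂ : ℝ}

lemma integrableOn_pow_mul_arsPDF (hρ₁ : 0 < ρ₁) (hρ₂ : 0 < ρ₂) (k : ℕ) :
    IntegrableOn (fun γ => γ ^ k * arsPDF p m K₁ K₂ ρ₁ ρ₂ γ) (Ioi 0) :=
  IntegrableOn.congr_fun
    (((integrableOn_pow_mul_rsPDF (m := m) (K := K₁) hρ₁ k).const_mul p).add
      ((integrableOn_pow_mul_rsPDF (m := m) (K := K₂) hρ₂ k).const_mul (1 - p)))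
    (fun γ _ => by simp only [Pi.add_apply, arsPDF]; ring) measurableSet_Ioi

lemma integral_arsPDF (hm : 0 < m) (hK₁ : K₁ + m ≠ 0) (hK₂ : K₂ + m ≠ 0)
    (hρ₁ : 0 < ρ₁) (hρ₂ : 0 < ρ₂) :
    ∫ γ in Ioi 0, arsPDF p m K₁ K₂ ρ₁ ρ₂ γ = 1 := by
  unfold arsPDF
  rw [integral_add ((integrableOn_rsPDF hρ₁).const_mul p)
      ((integrableOn_rsPDF hρ₂).const_mul (1 - p)), integral_const_mul, integral_const_mul,
    integral_rsPDF hm hK₁ hρ₁, integral_rsPDF hm hK₂ hρ₂]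
  ring

lemma arsPDF_scale {c₁ c₂ s : ℝ} (hc₁ : c₁ ≠ 0) (hc₂ : c₂ ≠ 0) (hs : s ≠ 0) (u : ℝ) :
    s * arsPDF p m K₁ K₂ (c₁ * s) (c₂ * s) (s * u) = arsPDF p m K₁ K₂ c₁ c₂ u := by
  unfold arsPDF
  rw [← rsPDF_scale hc₁ hs, ← rsPDF_scale hc₂ hs]
  ring

lemma setIntegral_Ioi_mul_arsPDF_mul_scale (φ ψ : ℝ → ℝ) {c₁ c₂ s : ℝ} (hc₁ : c₁ ≠ 0)
    (hc₂ : c₂ ≠ 0) (hs : 0 < s) :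
    ∫ γ in Ioi 0, φ γ * arsPDF p m K₁ K₂ (c₁ * s) (c₂ * s) γ * ψ γ =
      ∫ u in Ioi 0, φ (s * u) * arsPDF p m K₁ K₂ c₁ c₂ u * ψ (s * u) := by
  have h := integral_comp_mul_left_Ioi'
    (fun γ => φ γ * arsPDF p m K₁ K₂ (c₁ * s) (c₂ * s) γ * ψ γ) 0 hs
  rw [mul_zero, smul_eq_mul, ← integral_const_mul] at h
  rw [← h]
  congr 1 with u
  rw [← arsPDF_scale hc₁ hc₂ hs.ne' u]
  ring

lemma continuous_arsCDF : Continuous (arsCDF p m K₁ K₂ ρ₁ ρ₂) :=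
  (continuous_rsCDF.const_mul p).add (continuous_rsCDF.const_mul (1 - p))

lemma tendsto_arsCDF_atTop (hm : 0 < m) (hK₁ : K₁ + m ≠ 0) (hK₂ : K₂ + m ≠ 0)
    (hρ₁ : 0 < ρ₁) (hρ₂ : 0 < ρ₂) :
    Tendsto (arsCDF p m K₁ K₂ ρ₁ ρ₂) atTop (𝓝 1) := by
  have h := ((tendsto_rsCDF_atTop hm hK₁ hρ₁).const_mul p).add
    ((tendsto_rsCDF_atTop hm hK₂ hρ₂).const_mul (1 - p))
  rwa [mul_one, mul_one, add_sub_cancel] at h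

end AlternateRicianShadowed

theorem asc_slope_component_I1_general (mB mE : ℕ) (hmB : 0 < mB) (hmE : 0 < mE)
    (KB1 KB2 KE1 KE2 : ℝ) (hKB1 : 0 < KB1) (hKB2 : 0 < KB2)
    (hKE1 : 0 < KE1) (hKE2 : 0 < KE2)
    (ρE1 ρE2 c1 c2 : ℝ) (hρE1 : 0 < ρE1) (hρE2 : 0 < ρE2)
    (hc1 : 0 < c1) (hc2 : 0 < c2)
    (pB pE : ℝ) :
    Filter.Tendsto
      (fun s : ℝ =>
        (∫ γ in Set.Ioi (0 : ℝ),
            Real.log (1 + γ) * arsPDF pB mB KB1 KB2 (c1 * s) (c2 * s) γ *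
              arsCDF pE mE KE1 KE2 ρE1 ρE2 γ) / Real.logb 2 s)
      Filter.atTop (nhds (Real.log 2)) := by
  set g := arsPDF pB mB KB1 KB2 c1 c2
  have hg : IntegrableOn g (Ioi 0) := by simpa using integrableOn_pow_mul_arsPDF hc1 hc2 0
  have hg₁ : IntegrableOn (fun u => u * g u) (Ioi 0) := by
    simpa using integrableOn_pow_mul_arsPDF hc1 hc2 1
  have hlim := tendsto_integral_log_one_add_mul_mul_div_log (C := arsCDF pE mE KE1 KE2 ρE1 ρE2)
    hg (integrableOn_log_one_add_mul hg hg₁)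
    continuous_arsCDF (tendsto_arsCDF_atTop hmE (by positivity) (by positivity) hρE1 hρE2)
  rw [integral_arsPDF hmB (by positivity) (by positivity) hc1 hc2, one_mul] at hlim
  simpa using (hlim.const_mul (log 2)).congr' <| by
    filter_upwards [eventually_gt_atTop 0] with s hs
    rw [setIntegral_Ioi_mul_arsPDF_mul_scale _ _ hc1.ne' hc2.ne' hs, logb, div_div_eq_mul_div]
    ring

/-- The component `S_{∞,1}` of the high-SNR slope of the ASC equals `ln 2`. -/
theorem asc_slope_component_I1 (mB mE : ℕ) (hmB : 0 < mB) (hmE : 0 < mE)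
    (KB1 KB2 KE1 KE2 : ℝ) (hKB1 : 0 < KB1) (hKB2 : 0 < KB2)
    (hKE1 : 0 < KE1) (hKE2 : 0 < KE2)
    (ρE1 ρE2 c1 c2 : ℝ) (hρE1 : 0 < ρE1) (hρE2 : 0 < ρE2)
    (hc1 : 0 < c1) (hc2 : 0 < c2)
    (pB pE : ℝ) (hpB : pB ∈ Set.Icc (0 : ℝ) 1) (hpE : pE ∈ Set.Icc (0 : ℝ) 1) :
    Filter.Tendsto
      (fun s : ℝ =>
        (∫ γ in Set.Ioi (0 : ℝ),
            Real.log (1 + γ) * arsPDF pB mB KB1 KB2 (c1 * s) (c2 * s) γ *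
              arsCDF pE mE KE1 KE2 ρE1 ρE2 γ) / Real.logb 2 s)
      Filter.atTop (nhds (Real.log 2)) :=
  asc_slope_component_I1_general mB mE hmB hmE KB1 KB2 KE1 KE2 hKB1 hKB2 hKE1 hKE2 ρE1 ρE2 c1 c2
    hρE1 hρE2 hc1 hc2 pB pE
end
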